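/- Let ρ₀, ρ₁ be positive definite n×n complex matrices, set w₀ = ρ₀^{1/2} and w₁ = ρ₀^{-1/2}(ρ₀^{1/2}ρ₁ρ₀^{1/2})^{1/2}. Then w₁w₁* = ρ₁ and w₁*w₀ is positive semidefinite (Uhlmann's parallelity condition). -/

import Mathlib

open Matrix ComplexOrder

open Classical in
noncomputable def msqrt {n : ℕ} (A : Matrix (Fin n) (Fin n) ℂ) : Matrix (Fin n) (Fin n) ℂ :=
  if h : A.PosSemidef then
    (h.1.eigenvectorUnitary : Matrix (Fin n) (Fin n) ℂ) *
      diagonal ((↑) ∘ (√·) ∘ h.1.eigenvalues) *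
      (star h.1.eigenvectorUnitary : Matrix (Fin n) (Fin n) ℂ)
  else 0

noncomputable def geoMean {n : ℕ} (ρ₀ ρ₁ : Matrix (Fin n) (Fin n) ℂ) : Matrix (Fin n) (Fin n) ℂ :=
  msqrt ρ₀ * msqrt ((msqrt ρ₀)⁻¹ * ρ₁ * (msqrt ρ₀)⁻¹) * msqrt ρ₀

noncomputable def frobNorm {n : ℕ} (X : Matrix (Fin n) (Fin n) ℂ) : ℝ :=
  Real.sqrt (Matrix.trace (Xᴴ * X)).re

noncomputable def Matrix.PosSemidef.sqrt {n : ℕ} {A : Matrix (Fin n) (Fin n) ℂ}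
    (h : A.PosSemidef) : Matrix (Fin n) (Fin n) ℂ :=
  (h.1.eigenvectorUnitary : Matrix (Fin n) (Fin n) ℂ) *
    diagonal ((↑) ∘ (√·) ∘ h.1.eigenvalues) *
    (star h.1.eigenvectorUnitary : Matrix (Fin n) (Fin n) ℂ)

lemma Matrix.PosSemidef.posSemidef_sqrt {n : ℕ} {A : Matrix (Fin n) (Fin n) ℂ}
    (h : A.PosSemidef) : h.sqrt.PosSemidef := by
  unfold Matrix.PosSemidef.sqrt
  have hd : (diagonal ((↑) ∘ (√·) ∘ h.1.eigenvalues : Fin n → ℂ)).PosSemidef := by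
    rw [posSemidef_diagonal_iff]
    intro i
    simp only [Function.comp_apply]
    exact_mod_cast Real.sqrt_nonneg _
  have := hd.mul_mul_conjTranspose_same (h.1.eigenvectorUnitary : Matrix (Fin n) (Fin n) ℂ)
  simpa [star_eq_conjTranspose] using this

lemma Matrix.PosSemidef.sqrt_mul_self {n : ℕ} {A : Matrix (Fin n) (Fin n) ℂ}
    (h : A.PosSemidef) : h.sqrt * h.sqrt = A := by
  unfold Matrix.PosSemidef.sqrt
  set U : Matrix (Fin n) (Fin n) ℂ := (h.1.eigenvectorUnitary : Matrix (Fin n) (Fin n) ℂ) with hU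
  have hUU : (star h.1.eigenvectorUnitary : Matrix (Fin n) (Fin n) ℂ) * U = 1 :=
    by rw [hU]; simp
  have hDD : diagonal ((↑) ∘ (√·) ∘ h.1.eigenvalues : Fin n → ℂ) *
      diagonal ((↑) ∘ (√·) ∘ h.1.eigenvalues : Fin n → ℂ) =
      diagonal (RCLike.ofReal ∘ h.1.eigenvalues) := by
    rw [diagonal_mul_diagonal]
    congr 1
    funext i
    simp only [Function.comp_apply]
    rw [← Complex.ofReal_mul, Real.mul_self_sqrt (h.eigenvalues_nonneg i)]
    rfl
  conv_rhs => rw [h.1.spectral_theorem, Unitary.conjStarAlgAut_apply]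
  rw [← hDD]
  calc U * diagonal ((↑) ∘ (√·) ∘ h.1.eigenvalues) * (star h.1.eigenvectorUnitary : Matrix (Fin n) (Fin n) ℂ) *
      (U * diagonal ((↑) ∘ (√·) ∘ h.1.eigenvalues) * (star h.1.eigenvectorUnitary : Matrix (Fin n) (Fin n) ℂ))
      = U * diagonal ((↑) ∘ (√·) ∘ h.1.eigenvalues) * ((star h.1.eigenvectorUnitary : Matrix (Fin n) (Fin n) ℂ) * U) *
        diagonal ((↑) ∘ (√·) ∘ h.1.eigenvalues) * (star h.1.eigenvectorUnitary : Matrix (Fin n) (Fin n) ℂ) := by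
        simp only [Matrix.mul_assoc]
    _ = _ := by rw [hUU, Matrix.mul_one]; simp only [Matrix.mul_assoc]; rfl

lemma msqrt_of_psd {n : ℕ} {A : Matrix (Fin n) (Fin n) ℂ} (h : A.PosSemidef) :
    msqrt A = h.sqrt := by
  simp [msqrt, h, Matrix.PosSemidef.sqrt]

theorem parallel_amplitude {n : ℕ} (ρ₀ ρ₁ : Matrix (Fin n) (Fin n) ℂ)
    (h₀ : ρ₀.PosDef) (h₁ : ρ₁.PosDef)
    (w₀ w₁ : Matrix (Fin n) (Fin n) ℂ)
    (hw₀ : w₀ = msqrt ρ₀)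
    (hw₁ : w₁ = (msqrt ρ₀)⁻¹ * msqrt (msqrt ρ₀ * ρ₁ * msqrt ρ₀)) :
    w₁ * w₁ᴴ = ρ₁ ∧ (w₁ᴴ * w₀).PosSemidef := by
  have hps := h₀.posSemidef
  set S := msqrt ρ₀ with hS
  have hSdef : S = hps.sqrt := msqrt_of_psd hps
  have hSps : S.PosSemidef := hSdef ▸ hps.posSemidef_sqrt
  have hSherm : Sᴴ = S := hSps.1.eq
  have hSS : S * S = ρ₀ := by rw [hSdef]; exact hps.sqrt_mul_self
  -- S is a unit
  have hSu : IsUnit S := by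
    rw [isUnit_iff_isUnit_det]
    have : S.det * S.det = ρ₀.det := by rw [← det_mul, hSS]
    have hd := h₀.det_pos
    rcases eq_or_ne S.det 0 with h | h
    · rw [h, mul_zero] at this; rw [← this] at hd; simp at hd
    · exact h.isUnit
  have hSinvS : S⁻¹ * S = 1 := nonsing_inv_mul _ (isUnit_iff_isUnit_det _ |>.1 hSu)
  -- M := S ρ₁ S is PSD
  have hM : (S * ρ₁ * S).PosSemidef := by
    have := h₁.posSemidef.mul_mul_conjTranspose_same S
    rwa [hSherm] at this
  set T := msqrt (S * ρ₁ * S) with hT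
  have hTdef : T = hM.sqrt := msqrt_of_psd hM
  have hTps : T.PosSemidef := hTdef ▸ hM.posSemidef_sqrt
  have hTherm : Tᴴ = T := hTps.1.eq
  have hTT : T * T = S * ρ₁ * S := by rw [hTdef]; exact hM.sqrt_mul_self
  have hSinvherm : (S⁻¹)ᴴ = S⁻¹ := by rw [conjTranspose_nonsing_inv, hSherm]
  constructor
  · rw [hw₁, conjTranspose_mul, hTherm, hSinvherm]
    calc S⁻¹ * T * (T * S⁻¹) = S⁻¹ * (T * T) * S⁻¹ := by noncomm_ring
    _ = S⁻¹ * (S * ρ₁ * S) * S⁻¹ := by rw [hTT]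
    _ = (S⁻¹ * S) * ρ₁ * (S * S⁻¹) := by noncomm_ring
    _ = ρ₁ := by rw [hSinvS, mul_nonsing_inv _ (isUnit_iff_isUnit_det _ |>.1 hSu)]; simp
  · rw [hw₁, hw₀, conjTranspose_mul, hTherm, hSinvherm]
    have : T * S⁻¹ * S = T := by rw [mul_assoc, hSinvS, mul_one]
    rw [this]
    exact hTps
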